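/- arXiv:math/0408324 — 3 statements merged into one kernel-verified Lean document; each statement's English description precedes it below -/
import Mathlib

section
/- Let (ψ, π) be a Toeplitz representation of M_L in B with π unital. Then the pair (π, ψ(q(1))) is a Toeplitz-covariant representation of (A, α, L): setting V = ψ(q(1)), one has Vπ(a) = π(α(a))V and V*π(a)V = π(L(a)) for all a ∈ A; moreover ψ(q(a)) = π(a)V for all a ∈ A. -/
/-- If `(ψ, π)` is a Toeplitz representation of `M_L` with `π` unital, then
`(π, ψ(q(1)))` is a Toeplitz-covariant representation of `(A, α, L)`, and
`ψ(q(a)) = π(a)ψ(q(1))` for all `a`. -/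
theorem toeplitz_representation_induces_toeplitz_covariant {A B M : Type*} [CStarAlgebra A] [PartialOrder A]
    [StarOrderedRing A] [CStarAlgebra B] [NormedAddCommGroup M] [NormedSpace ℂ M]
    (α : A →⋆ₙₐ[ℂ] A) (L : A →L[ℂ] A)
    (hpos : ∀ a : A, 0 ≤ a → 0 ≤ L a)
    (htrans : ∀ a b : A, L (α a * b) = a * L b)
    -- `M` plays the role of the Hilbert bimodule `M_L`, with canonical map `q`
    (q : A →ₗ[ℂ] M) (hq : DenseRange q)
    (ract : M → A → M) (lact : A → M → M) (innerL : M → M → A)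
    (hnorm : ∀ m : M, ‖m‖ = Real.sqrt ‖innerL m m‖)
    (hq_ract : ∀ a c : A, ract (q a) c = q (a * α c))
    (hq_lact : ∀ a b : A, lact a (q b) = q (a * b))
    (hq_inner : ∀ a b : A, innerL (q a) (q b) = L (star a * b))
    (ψ : M →ₗ[ℂ] B) (π : A →⋆ₐ[ℂ] B)
    (h1 : ∀ (m : M) (a : A), ψ (ract m a) = ψ m * π a)
    (h2 : ∀ m n : M, star (ψ m) * ψ n = π (innerL m n))
    (h3 : ∀ (a : A) (m : M), ψ (lact a m) = π a * ψ m) :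
    (∀ a : A, ψ (q 1) * π a = π (α a) * ψ (q 1)) ∧
    (∀ a : A, star (ψ (q 1)) * π a * ψ (q 1) = π (L a)) ∧
    (∀ a : A, ψ (q a) = π a * ψ (q 1)) := by
  have key : ∀ a : A, ψ (q a) = π a * ψ (q 1) := by
    intro a
    have : lact a (q 1) = q a := by rw [hq_lact, mul_one]
    rw [← this, h3]
  refine ⟨?_, ?_, key⟩
  · intro a
    have h : ract (q 1) a = q (α a) := by rw [hq_ract, one_mul]
    calc ψ (q 1) * π a = ψ (ract (q 1) a) := (h1 _ _).symm
      _ = ψ (q (α a)) := by rw [h]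
      _ = π (α a) * ψ (q 1) := key _
  · intro a
    calc star (ψ (q 1)) * π a * ψ (q 1) = star (ψ (q 1)) * ψ (q a) := by
          rw [mul_assoc, ← key]
      _ = π (innerL (q 1) (q a)) := h2 _ _
      _ = π (L a) := by rw [hq_inner, star_one, one_mul]
end

section
/- Suppose A is a commutative unital C*-algebra, α an endomorphism of A, L a transfer operator, and I an ideal of A. If L is almost faithful on I (i.e., a ∈ I and L((ab)*(ab)) = 0 for all b ∈ A imply a = 0), then L is faithful on I (i.e., a ∈ I and L(a*a) = 0 imply a = 0). In particular, for commutative A, faithfulness and almost-faithfulness of L on an ideal are equivalent. -/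
/-- For a commutative unital C*-algebra `A`, a transfer operator `L` is almost faithful
on an ideal `I` if and only if it is faithful on `I`; in particular almost-faithfulness
implies faithfulness. -/
theorem commutative_almost_faithful_iff_faithful {A : Type*} [CommCStarAlgebra A]
    [PartialOrder A] [StarOrderedRing A]
    (α : A →⋆ₙₐ[ℂ] A) (L : A →L[ℂ] A)
    (hpos : ∀ a : A, 0 ≤ a → 0 ≤ L a)
    (htrans : ∀ a b : A, L (α a * b) = a * L b)
    (I : Ideal A) :
    ((∀ a ∈ I, (∀ b : A, L (star (a * b) * (a * b)) = 0) → a = 0) →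
      (∀ a ∈ I, L (star a * a) = 0 → a = 0)) ∧
    ((∀ a ∈ I, (∀ b : A, L (star (a * b) * (a * b)) = 0) → a = 0) ↔
      (∀ a ∈ I, L (star a * a) = 0 → a = 0)) := by
  have hmono : ∀ x y : A, x ≤ y → L x ≤ L y := by
    intro x y hxy
    have := hpos (y - x) (sub_nonneg.mpr hxy)
    rw [map_sub] at this
    exact sub_nonneg.mp this
  have key : ∀ a ∈ I, L (star a * a) = 0 → ∀ b : A, L (star (a * b) * (a * b)) = 0 := by
    intro a _ hL b
    have h1 : star (a * b) * (a * b) = star a * (star b * b) * a := by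
      simp [star_mul]; ring
    have h2 : star b * b ≤ algebraMap ℝ A (‖b‖ ^ 2) :=
      CStarAlgebra.star_mul_le_algebraMap_norm_sq
    have h3 : star a * (star b * b) * a ≤ star a * algebraMap ℝ A (‖b‖ ^ 2) * a :=
      star_left_conjugate_le_conjugate h2 a
    have h4 : star a * algebraMap ℝ A (‖b‖ ^ 2) * a
        = ((‖b‖ ^ 2 : ℝ) : ℂ) • (star a * a) := by
      rw [Algebra.algebraMap_eq_smul_one]
      simp only [Algebra.mul_smul_comm, Algebra.smul_mul_assoc, mul_one]
      rw [← Complex.coe_smul]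
    have hupper : L (star (a * b) * (a * b)) ≤ 0 := by
      calc L (star (a * b) * (a * b)) ≤ L (((‖b‖ ^ 2 : ℝ) : ℂ) • (star a * a)) := by
            rw [h1]; rw [← h4]; exact hmono _ _ h3
        _ = ((‖b‖ ^ 2 : ℝ) : ℂ) • L (star a * a) := by rw [map_smul]
        _ = 0 := by rw [hL, smul_zero]
    have hlower : 0 ≤ L (star (a * b) * (a * b)) :=
      hpos _ (star_mul_self_nonneg _)
    exact le_antisymm hupper hlower
  constructor
  · intro haf a ha hL
    exact haf a ha (key a ha hL)
  · constructor
    · intro haf a ha hL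
      exact haf a ha (key a ha hL)
    · intro hf a ha hb
      have := hb 1
      rw [mul_one] at this
      exact hf a ha this
end

section
/- Let A = UHF(n^∞) = lim→ A_N with A_N = M_n(ℂ)^{⊗N}, let α be the endomorphism induced by a ↦ e_{11} ⊗ a, and let L(a) = α^{-1}(p a p) where p = i^1(e_{11}) is the image of e_{11} ⊗ 1 ⊗ ⋯. Then L is a transfer operator for (A, α) that is almost faithful on A (if L((ab)*ab) = 0 for all b ∈ A then a = 0) but not faithful (there exists nonzero a with L(a*a) = 0). -/
/-!
Since `α` is an injective ⋆-homomorphism of C⋆-algebras it is isometric and reflects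
positivity, so every property of `L` can be checked after applying `α`, where `L` becomes the
compression `a ↦ p a p` with `p = α 1`. Linearity, continuity, positivity and
`L (α a * b) = a * L b` follow at once. If `L ((a b)⋆ (a b)) = 0` for all `b`, the C⋆-identity
gives `a b p = 0` for all `b`. Now `p` is the image under `i 1` of a nonzero matrix, and the
matrix algebra is simple, so `1` is a sum of terms `x p y`; hence `a = 0`. On the other hand
`L (a⋆ a) = 0` as soon as `a p = 0`, and the matrix unit `e₁₂`, whose first column is zero,
gives such a nonzero `a`.
-/

open Kronecker

section

variable {A B : Type*} [NonUnitalCStarAlgebra A] [PartialOrder A] [StarOrderedRing A]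
  [NonUnitalCStarAlgebra B] [PartialOrder B] [StarOrderedRing B]

theorem NonUnitalStarAlgHom.nonneg_of_map_nonneg (φ : A →⋆ₙₐ[ℂ] B) (hφ : Function.Injective φ)
    {x : A} (hx : 0 ≤ φ x) : 0 ≤ x := by
  have hsa : IsSelfAdjoint x := hφ <| by rw [map_star]; exact hx.isSelfAdjoint.star_eq
  -- `φ x⁺ - φ x⁻` is an orthogonal decomposition of `φ x`, hence the one given by `(φ x)^±`.
  obtain ⟨-, hneg⟩ := CFC.posPart_negPart_unique (a := φ x)
    (by rw [← map_sub, CFC.posPart_sub_negPart x hsa])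
    (by rw [← map_mul, CFC.posPart_mul_negPart, map_zero])
    (map_nonneg φ (CFC.posPart_nonneg x)) (map_nonneg φ (CFC.negPart_nonneg x))
  rw [← CFC.negPart_eq_zero_iff x hsa]
  exact hφ <| by rw [← hneg, map_zero, CFC.negPart_eq_zero_iff _ (hsa.map φ)]; exact hx

end

theorem eq_zero_of_forall_mul_mul_map_eq_zero {S R : Type*} [Ring S] [IsSimpleRing S]
    [Ring R] (φ : S →+* R) {P : S} (hP : P ≠ 0) {a : R} (h : ∀ y, a * φ y * φ P = 0) : a = 0 := by
  let T : TwoSidedIdeal S := .mk' {x | ∀ y, a * φ y * φ x = 0}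
    (fun y => by simp)
    (fun hx hy y => by simp [mul_add, hx y, hy y])
    (fun hx y => by simp [hx y])
    (fun {x t} ht y => by rw [map_mul, ← mul_assoc, mul_assoc a, ← map_mul, ht])
    (fun {t x} ht y => by rw [map_mul, ← mul_assoc, ht, zero_mul])
  have hT : (1 : S) ∈ T := IsSimpleRing.one_mem_of_ne_zero_mem T hP (by simpa [T] using h)
  simpa [T] using hT 1

namespace Matrix

variable {R m k m' : Type*} [DecidableEq k]

theorem reindex_kronecker_one_ne_zero [MulZeroOneClass R] [Nonempty k] (e : m × k ≃ m')
    {X : Matrix m m R} (hX : X ≠ 0) : reindex e e (X ⊗ₖ (1 : Matrix k k R)) ≠ 0 := by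
  obtain ⟨r, c, hrc⟩ : ∃ r c, X r c ≠ 0 := by
    by_contra! h
    exact hX (ext h)
  obtain ⟨l⟩ := ‹Nonempty k›
  intro h
  exact hrc (by simpa [kroneckerMap_apply] using congr_fun₂ h (e (r, l)) (e (c, l)))

theorem reindex_kronecker_one_mul [CommSemiring R] [Fintype m] [Fintype k] [Fintype m']
    (e : m × k ≃ m') (X Y : Matrix m m R) :
    reindex e e (X ⊗ₖ (1 : Matrix k k R)) * reindex e e (Y ⊗ₖ (1 : Matrix k k R)) =
      reindex e e ((X * Y) ⊗ₖ (1 : Matrix k k R)) := by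
  rw [reindex_apply, reindex_apply, reindex_apply, submatrix_mul_equiv, ← mul_kronecker_mul,
    one_mul]

end Matrix

/-- `L` is `α⁻¹` composed with the compression by the projection `α 1`. -/
def IsCornerInverse {A : Type*} [CStarAlgebra A] (α : A →⋆ₙₐ[ℂ] A) (L : A → A) : Prop :=
  ∀ a, α (L a) = α 1 * a * α 1

namespace IsCornerInverse

variable {A : Type*} [CStarAlgebra A] {α : A →⋆ₙₐ[ℂ] A} {L : A → A}

theorem isLinearMap (hα : Function.Injective α) (hL : IsCornerInverse α L) :
    IsLinearMap ℂ L where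
  map_add x y := hα <| by rw [hL, map_add, hL, hL, mul_add, add_mul]
  map_smul c x := hα <| by rw [map_smul, hL, hL, mul_smul_comm, smul_mul_assoc]

theorem continuous (hα : Function.Injective α) (hL : IsCornerInverse α L) : Continuous L :=
  AddMonoidHomClass.continuous_of_bound (IsLinearMap.mk' L (hL.isLinearMap hα))
    (‖α 1‖ * ‖α 1‖) fun a =>
    calc ‖L a‖ = ‖α 1 * a * α 1‖ := by rw [← hL, NonUnitalStarAlgHom.norm_map α hα]
      _ ≤ ‖α 1‖ * ‖a‖ * ‖α 1‖ := norm_mul₃_le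
      _ = ‖α 1‖ * ‖α 1‖ * ‖a‖ := by ring

theorem apply_mul (hα : Function.Injective α) (hL : IsCornerInverse α L) (a b : A) :
    L (α a * b) = a * L b := by
  apply hα
  have hleft : α 1 * α a = α a := by rw [← map_mul, one_mul]
  have hright : α a * α 1 = α a := by rw [← map_mul, mul_one]
  simp only [hL _, map_mul, ← mul_assoc, hleft, hright]

theorem mul_mul_map_one_eq_zero (hL : IsCornerInverse α L) {a : A}
    (ha : ∀ b, L (star (a * b) * (a * b)) = 0) (b : A) : a * b * α 1 = 0 := by
  rw [← CStarRing.star_mul_self_eq_zero_iff, star_mul, ((IsSelfAdjoint.one A).map α).star_eq,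
    mul_assoc, ← mul_assoc _ _ (α 1), ← mul_assoc, ← hL, ha b, map_zero]

theorem apply_star_mul_self_eq_zero (hα : Function.Injective α) (hL : IsCornerInverse α L)
    {a : A} (ha : a * α 1 = 0) : L (star a * a) = 0 :=
  hα <| by rw [hL, map_zero, mul_assoc, mul_assoc, ha, mul_zero, mul_zero]

variable [PartialOrder A] [StarOrderedRing A]

theorem nonneg (hα : Function.Injective α) (hL : IsCornerInverse α L) {a : A} (ha : 0 ≤ a) :
    0 ≤ L a :=
  α.nonneg_of_map_nonneg hα <| by
    rw [hL a]
    simpa only [((IsSelfAdjoint.one A).map α).star_eq] using star_left_conjugate_nonneg ha (α 1)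

end IsCornerInverse

/-- On the UHF algebra `A = UHF(n^∞) = lim→ ⊗^N M_n(ℂ)` (with connecting maps
`a ↦ a ⊗ 1`, realized via the embeddings `i N : M_{n^N}(ℂ) → A`), the endomorphism `α`
induced by `a ↦ e₁₁ ⊗ a` together with `L(a) = α⁻¹(p a p)`, where `p = α(1)` is the
image of `e₁₁ ⊗ 1 ⊗ ⋯`, gives a transfer operator `L` for `(A, α)` which is almost
faithful on `A` but not faithful. -/
theorem uhf_transfer_operator_almost_faithful_not_faithful
    {A : Type*} [CStarAlgebra A] [PartialOrder A] [StarOrderedRing A]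
    (n : ℕ) (hn : 2 ≤ n)
    (i : ∀ N : ℕ, Matrix (Fin (n ^ N)) (Fin (n ^ N)) ℂ →⋆ₐ[ℂ] A)
    (hi_inj : ∀ N, Function.Injective (i N))
    (α : A →⋆ₙₐ[ℂ] A) (hα_inj : Function.Injective α)
    (hα : ∀ (N : ℕ) (a : Matrix (Fin (n ^ N)) (Fin (n ^ N)) ℂ),
      α (i N a) = i (N + 1) (Matrix.reindex
        (finProdFinEquiv.trans (finCongr (pow_succ' n N).symm))
        (finProdFinEquiv.trans (finCongr (pow_succ' n N).symm))
        ((Matrix.single (⟨0, by omega⟩ : Fin n) (⟨0, by omega⟩ : Fin n) (1 : ℂ)) ⊗ₖ a)))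
    (L : A → A)
    (hL : ∀ a : A, α (L a) = α 1 * a * α 1) :
    IsLinearMap ℂ L ∧ Continuous L ∧
      (∀ a : A, 0 ≤ a → 0 ≤ L a) ∧
      (∀ a b : A, L (α a * b) = a * L b) ∧
      (∀ a : A, (∀ b : A, L (star (a * b) * (a * b)) = 0) → a = 0) ∧
      (∃ a : A, a ≠ 0 ∧ L (star a * a) = 0) := by
  have hL : IsCornerInverse α L := hL
  let e : Fin n × Fin (n ^ 0) ≃ Fin (n ^ 1) :=
    finProdFinEquiv.trans (finCongr (pow_succ' n 0).symm)
  have : Nonempty (Fin (n ^ 0)) := ⟨⟨0, by simp⟩⟩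
  have : Nonempty (Fin (n ^ 1)) := ⟨⟨0, by simp; omega⟩⟩
  let E (r c : Fin n) : Matrix (Fin (n ^ 1)) (Fin (n ^ 1)) ℂ :=
    Matrix.reindex e e (Matrix.single r c 1 ⊗ₖ 1)
  have hE (r c : Fin n) : E r c ≠ 0 :=
    Matrix.reindex_kronecker_one_ne_zero e fun h => by simpa using congr_fun₂ h r c
  let first : Fin n := ⟨0, by omega⟩
  let second : Fin n := ⟨1, by omega⟩
  have hp : α 1 = i 1 (E first first) := by rw [← map_one (i 0), hα 0 1]
  refine ⟨hL.isLinearMap hα_inj, hL.continuous hα_inj, fun a => hL.nonneg hα_inj,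
    hL.apply_mul hα_inj, fun a ha => ?_, ⟨i 1 (E first second), ?_, ?_⟩⟩
  · refine eq_zero_of_forall_mul_mul_map_eq_zero (i 1 : _ →+* A) (hE first first) fun y => ?_
    simpa [hp] using hL.mul_mul_map_one_eq_zero ha (i 1 y)
  · exact (map_ne_zero_iff _ (hi_inj 1)).mpr (hE first second)
  · refine hL.apply_star_mul_self_eq_zero hα_inj ?_
    have hsecond : second ≠ first := by simp [first, second, Fin.ext_iff]
    rw [hp, ← map_mul, Matrix.reindex_kronecker_one_mul,
      Matrix.single_mul_single_of_ne _ _ _ _ hsecond, Matrix.zero_kronecker]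
    exact map_zero (i 1)
end
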